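/- Let H : [0, ∞) → ℝ^{n×n} be a continuous family of symmetric matrices with least eigenvalue λ_min(H(t)) ≥ λ/2 for all t ≥ 0, where λ > 0. Let z ∈ ℝⁿ and let G : [0, ∞) → ℝⁿ be differentiable with dG/dt = H(t)(z − G(t)). Then ‖z − G(t)‖² ≤ exp(−λt)·‖z − G(0)‖² for all t ≥ 0. -/

import Mathlib

/-!
The squared residual `‖z - G t‖²` has derivative `-2 ⟪r, H r⟫ ≤ -λ ‖r‖²` with `r = z - G t`,
by the eigenvalue bound; Grönwall's inequality then gives the exponential decay.
-/

open Matrix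

theorem le_exp_mul_of_hasDerivAt_le_mul {f f' : ℝ → ℝ} {K : ℝ}
    (hf : ∀ t, 0 ≤ t → HasDerivAt f (f' t) t) (hbound : ∀ t, 0 ≤ t → f' t ≤ K * f t)
    {t : ℝ} (ht : 0 ≤ t) : f t ≤ Real.exp (K * t) * f 0 := by
  have := le_gronwallBound_of_liminf_deriv_right_le (δ := f 0) (ε := 0) (a := 0) (b := t)
    (fun s hs => (hf s hs.1).continuousAt.continuousWithinAt)
    (fun s hs _ hr => (hf s hs.1).hasDerivWithinAt.liminf_right_slope_le hr) le_rfl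
    (fun s hs => by simpa using hbound s hs.1) t ⟨ht, le_rfl⟩
  rwa [sub_zero, gronwallBound_ε0, mul_comm] at this

theorem EuclideanSpace.mul_norm_sq_le_inner_toLp_mulVec {ι : Type*} [Fintype ι]
    {A : Matrix ι ι ℝ} {c : ℝ} (hA : ∀ v : ι → ℝ, c * (v ⬝ᵥ v) ≤ v ⬝ᵥ A *ᵥ v)
    (x : EuclideanSpace ℝ ι) : c * ‖x‖ ^ 2 ≤ inner ℝ x (WithLp.toLp 2 (A *ᵥ x)) := by
  rw [← real_inner_self_eq_norm_sq, EuclideanSpace.inner_eq_star_dotProduct,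
    EuclideanSpace.inner_eq_star_dotProduct, star_trivial, WithLp.ofLp_toLp,
    dotProduct_comm (A *ᵥ _)]
  exact hA x

theorem residual_exponential_decay_general {n : ℕ} (lam : ℝ)
    (H : ℝ → Matrix (Fin n) (Fin n) ℝ)
    (heig : ∀ t, 0 ≤ t → ∀ v : Fin n → ℝ, lam / 2 * (v ⬝ᵥ v) ≤ v ⬝ᵥ (H t).mulVec v)
    (z : EuclideanSpace ℝ (Fin n)) (G : ℝ → EuclideanSpace ℝ (Fin n))
    (hG : ∀ t, 0 ≤ t →
      HasDerivAt G ((WithLp.toLp 2 ((H t).mulVec ((z - G t : EuclideanSpace ℝ (Fin n)) : Fin n → ℝ)) :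
        EuclideanSpace ℝ (Fin n))) t) :
    ∀ t, 0 ≤ t → ‖z - G t‖ ^ 2 ≤ Real.exp (-lam * t) * ‖z - G 0‖ ^ 2 := by
  intro t ht
  have hresidual s (hs : 0 ≤ s) := ((hG s hs).const_sub z).norm_sq
  refine le_exp_mul_of_hasDerivAt_le_mul hresidual (fun s hs => ?_) ht
  have hcoercive := EuclideanSpace.mul_norm_sq_le_inner_toLp_mulVec (heig s hs) (z - G s)
  rw [inner_neg_right]
  linarith

/-- Continuous-time NTK dynamics: if the prediction residual follows the linear dynamics
`dG/dt = H(t)(z − G(t))` with symmetric Gram matrices whose least eigenvalue is at least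
`λ/2`, then the squared residual decays linearly (exponentially). -/
theorem residual_exponential_decay {n : ℕ} (lam : ℝ) (hlam : 0 < lam)
    (H : ℝ → Matrix (Fin n) (Fin n) ℝ) (hcont : Continuous H)
    (hsymm : ∀ t, 0 ≤ t → (H t).IsSymm)
    (heig : ∀ t, 0 ≤ t → ∀ v : Fin n → ℝ, lam / 2 * (v ⬝ᵥ v) ≤ v ⬝ᵥ (H t).mulVec v)
    (z : EuclideanSpace ℝ (Fin n)) (G : ℝ → EuclideanSpace ℝ (Fin n))
    (hG : ∀ t, 0 ≤ t →
      HasDerivAt G ((WithLp.toLp 2 ((H t).mulVec ((z - G t : EuclideanSpace ℝ (Fin n)) : Fin n → ℝ)) :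
        EuclideanSpace ℝ (Fin n))) t) :
    ∀ t, 0 ≤ t → ‖z - G t‖ ^ 2 ≤ Real.exp (-lam * t) * ‖z - G 0‖ ^ 2 :=
  residual_exponential_decay_general lam H heig z G hG
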